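/- The Sklyanin-type factorized structure of the deformed double Yangian: the R-matrix R_{V8}(β;r), written in the form Id⊗Id + Σ_{α=1}^{3} W_α σ_α⊗σ_α with Pauli matrices σ_α, has structure constants J_{αβ} = (W_α²−W_β²)/(W_γ²−1) independent of β, given by J₁₂ = −J₃₁ = tan²(π/2r) and J₂₃ = 0. -/

import Mathlib

open Matrix Complex

/-!
Both `w₂` and `w₃` reduce to `sin y cos y / (cos (x+y) sin (x+y))`, so `W₂ = W₃` and
`J₂₃ = 0`. With `A = cos (2x+y)` and `B = sin (2x+y)` one finds `W₁ = tan y · A / B` and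
`W₃ = sin y / B`; then `A² = 1 - B²` turns `W₁² - W₃²` into `tan² y · (W₃² - 1)`, which
gives `J₁₂`, and `J₃₁ = -J₁₂` because `W₂ = W₃`.
-/

/-- Kronecker product of two 2×2 matrices as a 4×4 matrix,
basis ordering (11,12,21,22). -/
def kron (A B : Matrix (Fin 2) (Fin 2) ℂ) : Matrix (Fin 4) (Fin 4) ℂ :=
  Matrix.of fun i j =>
    A ⟨i.val / 2, by have := i.isLt; omega⟩ ⟨j.val / 2, by have := j.isLt; omega⟩ *
    B ⟨i.val % 2, by omega⟩ ⟨j.val % 2, by omega⟩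

def sigma1 : Matrix (Fin 2) (Fin 2) ℂ := !![0, 1; 1, 0]
noncomputable def sigma2 : Matrix (Fin 2) (Fin 2) ℂ := !![0, -I; I, 0]
def sigma3 : Matrix (Fin 2) (Fin 2) ℂ := !![1, 0; 0, -1]

/-- Entries of `R_{V8}(β;r)` in the variables `s1 = sin x`, `c1 = cos x`,
`s2 = sin y`, `c2 = cos y`, `x = iβ/2r`, `y = π/2r`. -/
noncomputable def aE (s1 c1 s2 c2 : ℂ) : ℂ := c1 * c2 / (c1 * c2 - s1 * s2)
noncomputable def dE (s1 c1 s2 c2 : ℂ) : ℂ := -(s1 * s2) / (c1 * c2 - s1 * s2)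
noncomputable def bE (s1 c1 s2 c2 : ℂ) : ℂ := s1 * c2 / (s1 * c2 + c1 * s2)
noncomputable def cE (s1 c1 s2 c2 : ℂ) : ℂ := c1 * s2 / (s1 * c2 + c1 * s2)

/-- The eight-vertex deformed double Yangian R-matrix `R_{V8}(β;r)`. -/
noncomputable def RV8 (s1 c1 s2 c2 : ℂ) : Matrix (Fin 4) (Fin 4) ℂ :=
  !![aE s1 c1 s2 c2, 0, 0, dE s1 c1 s2 c2;
     0, bE s1 c1 s2 c2, cE s1 c1 s2 c2, 0;
     0, cE s1 c1 s2 c2, bE s1 c1 s2 c2, 0;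
     dE s1 c1 s2 c2, 0, 0, aE s1 c1 s2 c2]

/-- The coefficients of the decomposition `R = w₀·Id⊗Id + Σ_α w_α σ_α⊗σ_α`. -/
noncomputable def w0 (s1 c1 s2 c2 : ℂ) : ℂ := (aE s1 c1 s2 c2 + bE s1 c1 s2 c2) / 2
noncomputable def w1 (s1 c1 s2 c2 : ℂ) : ℂ := (cE s1 c1 s2 c2 + dE s1 c1 s2 c2) / 2
noncomputable def w2 (s1 c1 s2 c2 : ℂ) : ℂ := (cE s1 c1 s2 c2 - dE s1 c1 s2 c2) / 2
noncomputable def w3 (s1 c1 s2 c2 : ℂ) : ℂ := (aE s1 c1 s2 c2 - bE s1 c1 s2 c2) / 2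

/-- The normalized coefficients `W_α := w_α/w₀`. -/
noncomputable def W1 (s1 c1 s2 c2 : ℂ) : ℂ := w1 s1 c1 s2 c2 / w0 s1 c1 s2 c2
noncomputable def W2 (s1 c1 s2 c2 : ℂ) : ℂ := w2 s1 c1 s2 c2 / w0 s1 c1 s2 c2
noncomputable def W3 (s1 c1 s2 c2 : ℂ) : ℂ := w3 s1 c1 s2 c2 / w0 s1 c1 s2 c2

theorem eightVertex_eq_pauli_decomposition (a b c d : ℂ) :
    !![a, 0, 0, d; 0, b, c, 0; 0, c, b, 0; d, 0, 0, a] =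
      ((a + b) / 2) • (1 : Matrix (Fin 4) (Fin 4) ℂ) + ((c + d) / 2) • kron sigma1 sigma1 +
        ((c - d) / 2) • kron sigma2 sigma2 + ((a - b) / 2) • kron sigma3 sigma3 := by
  ext i j
  fin_cases i <;> fin_cases j <;>
    simp [kron, sigma1, sigma2, sigma3, one_apply] <;> ring

/-- `cos (2x + y)` and `sin (2x + y)`, expanded in `s1 = sin x`, `c1 = cos x`, `s2 = sin y`,
`c2 = cos y`. -/
def cosTwoAdd (s1 c1 s2 c2 : ℂ) : ℂ := (c1 ^ 2 - s1 ^ 2) * c2 - 2 * s1 * c1 * s2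

def sinTwoAdd (s1 c1 s2 c2 : ℂ) : ℂ := 2 * s1 * c1 * c2 + (c1 ^ 2 - s1 ^ 2) * s2

section

variable {s1 c1 s2 c2 : ℂ}

theorem cosTwoAdd_sq_add_sinTwoAdd_sq (hpy1 : s1 ^ 2 + c1 ^ 2 = 1) (hpy2 : s2 ^ 2 + c2 ^ 2 = 1) :
    cosTwoAdd s1 c1 s2 c2 ^ 2 + sinTwoAdd s1 c1 s2 c2 ^ 2 = 1 := by
  unfold cosTwoAdd sinTwoAdd
  linear_combination (s1 ^ 2 + c1 ^ 2 + 1) * (s2 ^ 2 + c2 ^ 2) * hpy1 + hpy2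

variable (hden1 : c1 * c2 - s1 * s2 ≠ 0) (hden2 : s1 * c2 + c1 * s2 ≠ 0)
include hden1 hden2

theorem aE_add_bE : aE s1 c1 s2 c2 + bE s1 c1 s2 c2 =
    c2 * sinTwoAdd s1 c1 s2 c2 / ((c1 * c2 - s1 * s2) * (s1 * c2 + c1 * s2)) := by
  rw [aE, bE, div_add_div _ _ hden1 hden2, sinTwoAdd]
  ring

theorem cE_add_dE : cE s1 c1 s2 c2 + dE s1 c1 s2 c2 =
    s2 * cosTwoAdd s1 c1 s2 c2 / ((c1 * c2 - s1 * s2) * (s1 * c2 + c1 * s2)) := by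
  rw [cE, dE, div_add_div _ _ hden2 hden1, cosTwoAdd,
    mul_comm (s1 * c2 + c1 * s2) (c1 * c2 - s1 * s2)]
  ring

theorem aE_sub_bE (hpy1 : s1 ^ 2 + c1 ^ 2 = 1) : aE s1 c1 s2 c2 - bE s1 c1 s2 c2 =
    s2 * c2 / ((c1 * c2 - s1 * s2) * (s1 * c2 + c1 * s2)) := by
  rw [aE, bE, div_sub_div _ _ hden1 hden2]
  congr 1
  linear_combination s2 * c2 * hpy1

theorem cE_sub_dE (hpy1 : s1 ^ 2 + c1 ^ 2 = 1) : cE s1 c1 s2 c2 - dE s1 c1 s2 c2 =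
    s2 * c2 / ((c1 * c2 - s1 * s2) * (s1 * c2 + c1 * s2)) := by
  rw [cE, dE, div_sub_div _ _ hden2 hden1, mul_comm (s1 * c2 + c1 * s2) (c1 * c2 - s1 * s2)]
  congr 1
  linear_combination s2 * c2 * hpy1

theorem W1_eq : W1 s1 c1 s2 c2 = s2 * cosTwoAdd s1 c1 s2 c2 / (c2 * sinTwoAdd s1 c1 s2 c2) := by
  rw [W1, w1, w0, div_div_div_cancel_right₀ two_ne_zero, cE_add_dE hden1 hden2,
    aE_add_bE hden1 hden2, div_div_div_cancel_right₀ (mul_ne_zero hden1 hden2)]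

theorem W3_eq (hpy1 : s1 ^ 2 + c1 ^ 2 = 1) :
    W3 s1 c1 s2 c2 = s2 * c2 / (c2 * sinTwoAdd s1 c1 s2 c2) := by
  rw [W3, w3, w0, div_div_div_cancel_right₀ two_ne_zero, aE_sub_bE hden1 hden2 hpy1,
    aE_add_bE hden1 hden2, div_div_div_cancel_right₀ (mul_ne_zero hden1 hden2)]

theorem W2_eq_W3 (hpy1 : s1 ^ 2 + c1 ^ 2 = 1) : W2 s1 c1 s2 c2 = W3 s1 c1 s2 c2 := by
  rw [W2, W3, w2, w3, cE_sub_dE hden1 hden2 hpy1, aE_sub_bE hden1 hden2 hpy1]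

theorem mul_sinTwoAdd_ne_zero (hw0 : w0 s1 c1 s2 c2 ≠ 0) : c2 * sinTwoAdd s1 c1 s2 c2 ≠ 0 := by
  intro h
  rw [w0, aE_add_bE hden1 hden2, h, zero_div, zero_div] at hw0
  exact hw0 rfl

end

theorem sq_sub_sq_div_sq_sub_one_eq_tan_sq {K : Type*} [Field K] {s c A B : K}
    (hsc : s ^ 2 + c ^ 2 = 1) (hAB : A ^ 2 + B ^ 2 = 1) (hcB : c * B ≠ 0)
    (hV : (s * c / (c * B)) ^ 2 - 1 ≠ 0) :
    ((s * A / (c * B)) ^ 2 - (s * c / (c * B)) ^ 2) / ((s * c / (c * B)) ^ 2 - 1) =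
      s ^ 2 / c ^ 2 := by
  have hc : c ≠ 0 := left_ne_zero_of_mul hcB
  have hB : B ≠ 0 := right_ne_zero_of_mul hcB
  rw [mul_comm c B, mul_div_mul_right _ _ hc] at hV ⊢
  rw [div_eq_div_iff hV (pow_ne_zero 2 hc)]
  field_simp
  linear_combination s ^ 2 * hAB - s ^ 2 * hsc

theorem stmt18_general (s1 c1 s2 c2 : ℂ)
    (hpy1 : s1 ^ 2 + c1 ^ 2 = 1) (hpy2 : s2 ^ 2 + c2 ^ 2 = 1)
    (hden1 : c1 * c2 - s1 * s2 ≠ 0) (hden2 : s1 * c2 + c1 * s2 ≠ 0)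
    (hw0 : w0 s1 c1 s2 c2 ≠ 0)
    (hW3 : W3 s1 c1 s2 c2 ^ 2 - 1 ≠ 0) :
    RV8 s1 c1 s2 c2 =
        w0 s1 c1 s2 c2 • (1 : Matrix (Fin 4) (Fin 4) ℂ) +
        w1 s1 c1 s2 c2 • kron sigma1 sigma1 +
        w2 s1 c1 s2 c2 • kron sigma2 sigma2 +
        w3 s1 c1 s2 c2 • kron sigma3 sigma3 ∧
    (W1 s1 c1 s2 c2 ^ 2 - W2 s1 c1 s2 c2 ^ 2) / (W3 s1 c1 s2 c2 ^ 2 - 1) =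
        s2 ^ 2 / c2 ^ 2 ∧
    (W3 s1 c1 s2 c2 ^ 2 - W1 s1 c1 s2 c2 ^ 2) / (W2 s1 c1 s2 c2 ^ 2 - 1) =
        -(s2 ^ 2 / c2 ^ 2) ∧
    (W2 s1 c1 s2 c2 ^ 2 - W3 s1 c1 s2 c2 ^ 2) / (W1 s1 c1 s2 c2 ^ 2 - 1) = 0 := by
  have hB := mul_sinTwoAdd_ne_zero hden1 hden2 hw0
  have hW23 := W2_eq_W3 hden1 hden2 hpy1
  have J12 : (W1 s1 c1 s2 c2 ^ 2 - W3 s1 c1 s2 c2 ^ 2) / (W3 s1 c1 s2 c2 ^ 2 - 1) =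
      s2 ^ 2 / c2 ^ 2 := by
    rw [W3_eq hden1 hden2 hpy1] at hW3 ⊢
    rw [W1_eq hden1 hden2]
    exact sq_sub_sq_div_sq_sub_one_eq_tan_sq hpy2 (cosTwoAdd_sq_add_sinTwoAdd_sq hpy1 hpy2) hB hW3
  refine ⟨eightVertex_eq_pauli_decomposition _ _ _ _, ?_, ?_, ?_⟩
  · rwa [hW23]
  · rw [hW23, ← neg_sub, neg_div, J12]
  · rw [hW23, sub_self, zero_div]

/-- The Sklyanin-type factorized structure of the deformed double Yangian:
`R_{V8} = w₀·Id⊗Id + Σ_α w_α σ_α⊗σ_α`, and the structure constants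
`J_{αβ} = (W_α²−W_β²)/(W_γ²−1)` are independent of `β` (i.e. of `x`), with
`J₁₂ = −J₃₁ = tan²(π/2r) = s2²/c2²` and `J₂₃ = 0`. -/
theorem stmt18 (s1 c1 s2 c2 : ℂ)
    (hpy1 : s1 ^ 2 + c1 ^ 2 = 1) (hpy2 : s2 ^ 2 + c2 ^ 2 = 1)
    (hden1 : c1 * c2 - s1 * s2 ≠ 0) (hden2 : s1 * c2 + c1 * s2 ≠ 0)
    (hc2 : c2 ≠ 0) (hw0 : w0 s1 c1 s2 c2 ≠ 0)
    (hW1 : W1 s1 c1 s2 c2 ^ 2 - 1 ≠ 0)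
    (hW2 : W2 s1 c1 s2 c2 ^ 2 - 1 ≠ 0)
    (hW3 : W3 s1 c1 s2 c2 ^ 2 - 1 ≠ 0) :
    RV8 s1 c1 s2 c2 =
        w0 s1 c1 s2 c2 • (1 : Matrix (Fin 4) (Fin 4) ℂ) +
        w1 s1 c1 s2 c2 • kron sigma1 sigma1 +
        w2 s1 c1 s2 c2 • kron sigma2 sigma2 +
        w3 s1 c1 s2 c2 • kron sigma3 sigma3 ∧
    (W1 s1 c1 s2 c2 ^ 2 - W2 s1 c1 s2 c2 ^ 2) / (W3 s1 c1 s2 c2 ^ 2 - 1) =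
        s2 ^ 2 / c2 ^ 2 ∧
    (W3 s1 c1 s2 c2 ^ 2 - W1 s1 c1 s2 c2 ^ 2) / (W2 s1 c1 s2 c2 ^ 2 - 1) =
        -(s2 ^ 2 / c2 ^ 2) ∧
    (W2 s1 c1 s2 c2 ^ 2 - W3 s1 c1 s2 c2 ^ 2) / (W1 s1 c1 s2 c2 ^ 2 - 1) = 0 :=
  stmt18_general s1 c1 s2 c2 hpy1 hpy2 hden1 hden2 hw0 hW3
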